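/- Let α ∈ (0,1), T > 0, A ∈ ℝ^{n×n}. If for some nonzero y₀ ∈ ℝⁿ the analytic function s ↦ Bᵀ E_{α,α}(s^α Aᵀ) y₀ vanishes for all s ∈ [0,T], then Bᵀ (Aᵀ)^k y₀ = 0 for all k ∈ ℕ. -/

import Mathlib

open Matrix

/-- The two-parameter Mittag-Leffler matrix function of a real n×n matrix. -/
noncomputable def mlMat {n : ℕ} (α β : ℝ) (M : Matrix (Fin n) (Fin n) ℝ) :
    Matrix (Fin n) (Fin n) ℝ :=
  ∑' k : ℕ, (Real.Gamma (α * k + β))⁻¹ • M ^ k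

/-!
Substituting `t = s ^ α`, the hypothesis says that the power series
`t ↦ ∑ₖ tᵏ Γ(αk + α)⁻¹ Bᵀ (Aᵀ)ᵏ y₀` vanishes for small `t > 0`. Since `Γ ≥ 1` on `[2, ∞)`, its
coefficients are eventually dominated by those of a geometric series in `‖Aᵀ‖`, so it has positive
radius of convergence; a function analytic at `0` that vanishes on a one-sided neighbourhood
vanishes near `0`, hence all its coefficients vanish, and `Γ(αk + α) ≠ 0`.
-/

open Filter Topology Set

theorem Real.one_le_Gamma_of_two_le {y : ℝ} (hy : 2 ≤ y) : 1 ≤ Real.Gamma y := by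
  simpa [Real.Gamma_two] using
    Real.Gamma_strictMonoOn_Ici.monotoneOn (mem_Ici.2 le_rfl) (mem_Ici.2 hy) hy

theorem eventually_norm_inv_Gamma_le_one {α : ℝ} (hα : 0 < α) (β : ℝ) :
    ∀ᶠ k : ℕ in atTop, ‖(Real.Gamma (α * k + β))⁻¹‖ ≤ 1 := by
  obtain ⟨K, hK⟩ := exists_nat_ge ((2 - β) / α)
  filter_upwards [eventually_ge_atTop K] with k hk
  have h2 : 2 ≤ α * k + β := by
    have : (2 - β) / α ≤ k := hK.trans (by exact_mod_cast hk)
    rw [div_le_iff₀ hα] at this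
    linarith
  have hΓ := Real.one_le_Gamma_of_two_le h2
  rw [norm_inv, Real.norm_of_nonneg (by linarith)]
  exact inv_le_one_of_one_le₀ hΓ

theorem summable_norm_inv_Gamma_smul_pow {R : Type*} [NormedRing R] [NormedAlgebra ℝ R]
    {α : ℝ} (hα : 0 < α) (β : ℝ) {x : R} (hx : ‖x‖ < 1) :
    Summable fun k : ℕ => ‖(Real.Gamma (α * k + β))⁻¹ • x ^ k‖ := by
  refine .of_norm_bounded_eventually_nat (summable_geometric_of_lt_one (norm_nonneg x) hx) ?_
  filter_upwards [eventually_norm_inv_Gamma_le_one hα β, eventually_gt_atTop 0] with k hΓ hk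
  rw [norm_norm, norm_smul]
  calc ‖(Real.Gamma (α * k + β))⁻¹‖ * ‖x ^ k‖ ≤ 1 * ‖x‖ ^ k :=
        mul_le_mul hΓ (norm_pow_le' x hk) (norm_nonneg _) zero_le_one
    _ = ‖x‖ ^ k := one_mul _

theorem eq_zero_of_tsum_smul_pow_eq_zero_on_Ioo {E : Type*} [NormedAddCommGroup E]
    [NormedSpace ℝ E] [CompleteSpace E] {v : ℕ → E} {r ε : ℝ} (hr : 0 < r)
    (hv : Summable fun k => ‖v k‖ * r ^ k) (hε : 0 < ε)
    (h : ∀ t ∈ Ioo 0 ε, ∑' k, t ^ k • v k = 0) : v = 0 := by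
  let p : FormalMultilinearSeries ℝ ℝ E := fun k =>
    ContinuousMultilinearMap.mkPiRing ℝ (Fin k) (v k)
  have hcoeff : ∀ k, p.coeff k = v k := fun k => by
    simp [p, FormalMultilinearSeries.coeff]
  have hsum : ∀ t, p.sum t = ∑' k, t ^ k • v k := fun t => by
    simp only [FormalMultilinearSeries.sum, FormalMultilinearSeries.apply_eq_pow_smul_coeff, hcoeff]
  have hrad : 0 < p.radius := by
    lift r to NNReal using hr.le
    refine lt_of_lt_of_le (ENNReal.coe_pos.2 (mod_cast hr)) (p.le_radius_of_summable_norm ?_)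
    simpa [p, ContinuousMultilinearMap.norm_mkPiRing] using hv
  have hp : HasFPowerSeriesAt p.sum p 0 := (p.hasFPowerSeriesOnBall hrad).hasFPowerSeriesAt
  have hright : ∀ᶠ t in 𝓝[>] 0, p.sum t = 0 := by
    filter_upwards [Ioo_mem_nhdsGT hε] with t ht
    rw [hsum, h t ht]
  have hnear : ∀ᶠ t in 𝓝 0, p.sum t = 0 :=
    hp.analyticAt.frequently_zero_iff_eventually_zero.1
      (hright.frequently.filter_mono (nhdsGT_le_nhdsNE 0))
  funext k
  rw [← hcoeff, hp.locally_zero_iff.1 hnear]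
  rfl

section

-- Any submultiplicative norm would do; this one induces the product topology in which `mlMat`
-- is summed.
attribute [local instance] Matrix.linftyOpNormedRing Matrix.linftyOpNormedAlgebra

theorem map_mlMat_smul {n : ℕ} {E : Type*} [NormedAddCommGroup E] [NormedSpace ℝ E]
    (L : Matrix (Fin n) (Fin n) ℝ →L[ℝ] E) {α : ℝ} (hα : 0 < α) (β : ℝ)
    (M : Matrix (Fin n) (Fin n) ℝ) {t : ℝ} (ht : ‖t • M‖ < 1) :
    L (mlMat α β (t • M)) = ∑' k : ℕ, t ^ k • (Real.Gamma (α * k + β))⁻¹ • L (M ^ k) := by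
  rw [mlMat, L.map_tsum (summable_norm_inv_Gamma_smul_pow hα β ht).of_norm]
  congr 1 with k
  rw [smul_pow, map_smul, map_smul, smul_comm]

theorem map_pow_eq_zero_of_map_mlMat_smul_eq_zero {n : ℕ} {E : Type*} [NormedAddCommGroup E]
    [NormedSpace ℝ E] [CompleteSpace E] (L : Matrix (Fin n) (Fin n) ℝ →L[ℝ] E) {α β : ℝ}
    (hα : 0 < α) (hβ : 0 < β) (M : Matrix (Fin n) (Fin n) ℝ) {ε : ℝ} (hε : 0 < ε)
    (h : ∀ t ∈ Ioo 0 ε, L (mlMat α β (t • M)) = 0) (k : ℕ) : L (M ^ k) = 0 := by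
  obtain ⟨C, -, hC⟩ := L.bound
  obtain ⟨r, hr, hrM⟩ := exists_pos_mul_lt one_pos ‖M‖
  have hsmall : ∀ t, 0 ≤ t → t ≤ r → ‖t • M‖ < 1 := fun t ht₀ htr => by
    rw [norm_smul, Real.norm_of_nonneg ht₀]
    nlinarith [norm_nonneg M]
  set v : ℕ → E := fun k => (Real.Gamma (α * k + β))⁻¹ • L (M ^ k)
  have hv : Summable fun k => ‖v k‖ * r ^ k := by
    refine .of_nonneg_of_le (fun k => by positivity) (fun k => ?_)
      ((summable_norm_inv_Gamma_smul_pow hα β (hsmall r hr.le le_rfl)).mul_left C)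
    calc ‖v k‖ * r ^ k = ‖L ((Real.Gamma (α * k + β))⁻¹ • (r • M) ^ k)‖ := by
          rw [smul_pow, map_smul, map_smul, smul_comm, norm_smul (r ^ k),
            Real.norm_of_nonneg (by positivity), mul_comm]
      _ ≤ C * ‖(Real.Gamma (α * k + β))⁻¹ • (r • M) ^ k‖ := hC _
  have hv0 : v = 0 := by
    refine eq_zero_of_tsum_smul_pow_eq_zero_on_Ioo hr hv (lt_min hr hε) fun t ht => ?_
    rw [← map_mlMat_smul L hα β M (hsmall t ht.1.le (ht.2.le.trans (min_le_left _ _)))]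
    exact h t ⟨ht.1, ht.2.trans_le (min_le_right _ _)⟩
  have hΓ : (Real.Gamma (α * k + β))⁻¹ ≠ 0 :=
    inv_ne_zero (Real.Gamma_pos_of_pos (by positivity)).ne'
  exact (smul_eq_zero.1 (congrFun hv0 k)).resolve_left hΓ

end

theorem stmt8_general (n m : ℕ) (α T : ℝ) (hα : α ∈ Set.Ioo (0 : ℝ) 1) (hT : 0 < T)
    (A : Matrix (Fin n) (Fin n) ℝ) (B : Matrix (Fin n) (Fin m) ℝ)
    (y₀ : Fin n → ℝ)
    (hvanish : ∀ s ∈ Set.Icc (0 : ℝ) T,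
      Bᵀ.mulVec ((mlMat α α ((s ^ α) • Aᵀ)).mulVec y₀) = 0) :
    ∀ k : ℕ, Bᵀ.mulVec ((Aᵀ ^ k).mulVec y₀) = 0 := by
  let L : Matrix (Fin n) (Fin n) ℝ →L[ℝ] (Fin m → ℝ) :=
    LinearMap.toContinuousLinearMap (Bᵀ.mulVecLin ∘ₗ (mulVecBilin ℝ ℝ).flip y₀)
  refine map_pow_eq_zero_of_map_mlMat_smul_eq_zero L hα.1 hα.1 Aᵀ (Real.rpow_pos_of_pos hT α)
    fun t ht => ?_
  have hs : t ^ α⁻¹ ∈ Icc 0 T :=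
    ⟨Real.rpow_nonneg ht.1.le _, (Real.rpow_inv_le_iff_of_pos ht.1.le hT.le hα.1).2 ht.2.le⟩
  have hzero := hvanish _ hs
  rwa [Real.rpow_inv_rpow ht.1.le hα.1.ne'] at hzero

/-- if `s ↦ Bᵀ E_{α,α}(s^α Aᵀ) y₀` vanishes on `[0,T]` for a nonzero `y₀`,
then `Bᵀ (Aᵀ)^k y₀ = 0` for all `k`. -/
theorem stmt8 (n m : ℕ) (α T : ℝ) (hα : α ∈ Set.Ioo (0 : ℝ) 1) (hT : 0 < T)
    (A : Matrix (Fin n) (Fin n) ℝ) (B : Matrix (Fin n) (Fin m) ℝ)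
    (y₀ : Fin n → ℝ) (hy₀ : y₀ ≠ 0)
    (hvanish : ∀ s ∈ Set.Icc (0 : ℝ) T,
      Bᵀ.mulVec ((mlMat α α ((s ^ α) • Aᵀ)).mulVec y₀) = 0) :
    ∀ k : ℕ, Bᵀ.mulVec ((Aᵀ ^ k).mulVec y₀) = 0 :=
  stmt8_general n m α T hα hT A B y₀ hvanish
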